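/- arXiv:1802.00240 — 5 statements merged into one kernel-verified Lean document; each statement's English description precedes it below -/
import Mathlib

section
/- Let c₂ ≠ 1 and let w(x,y) = c₁·x^{1/(1−c₂)}·(y+ax)^{c₂/(c₂−1)} on an open set where x > 0 and y + ax > 0. Then the isotropic Gaussian curvature K = w_xx·w_yy − (w_xy)² of the graph z = w(x,y) vanishes identically. -/
noncomputable def wxx (w : ℝ → ℝ → ℝ) (x y : ℝ) : ℝ :=
  deriv (fun t => deriv (fun t' => w t' y) t) x

noncomputable def wyy (w : ℝ → ℝ → ℝ) (x y : ℝ) : ℝ :=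
  deriv (fun s => deriv (fun s' => w x s') s) y

noncomputable def wxy (w : ℝ → ℝ → ℝ) (x y : ℝ) : ℝ :=
  deriv (fun s => deriv (fun t => w t s) x) y

/-- Isotropic Gaussian curvature of the graph z = w(x,y). -/
noncomputable def Kiso (w : ℝ → ℝ → ℝ) (x y : ℝ) : ℝ :=
  wxx w x y * wyy w x y - (wxy w x y)^2

/-- Isotropic mean curvature of the graph z = w(x,y). -/
noncomputable def Hiso (w : ℝ → ℝ → ℝ) (x y : ℝ) : ℝ :=
  (wxx w x y + wyy w x y) / 2

noncomputable def D2 (f : ℝ → ℝ) : ℝ → ℝ := deriv (deriv f)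

/-! With `u = y + a x`, the Hessian determinant of `c x^p u^q` is
`c² p q (1 - p - q) (x^(p-1) u^(q-1))²`. The exponents `1/(1-c₂)` and `c₂/(c₂-1)` add up to `1`
(`w` is homogeneous of degree one), so it vanishes. -/

open Topology

noncomputable def prodRpow (c p q a x y : ℝ) : ℝ := c * x ^ p * (y + a * x) ^ q

section
variable {c p q a x y : ℝ}

lemma hasDerivAt_prodRpow_fst (hx : 0 < x) (hu : 0 < y + a * x) :
    HasDerivAt (prodRpow c p q a · y)
      (prodRpow (c * p) (p - 1) q a x y + prodRpow (c * a * q) p (q - 1) a x y) x := by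
  have hxp : HasDerivAt (· ^ p) (p * x ^ (p - 1)) x := Real.hasDerivAt_rpow_const (Or.inl hx.ne')
  have hu_q : HasDerivAt (fun t => (y + a * t) ^ q) (a * q * (y + a * x) ^ (q - 1)) x := by
    simpa using (((hasDerivAt_id x).const_mul a).const_add y).rpow_const (p := q) (Or.inl hu.ne')
  unfold prodRpow
  exact ((hxp.const_mul c).mul hu_q).congr_deriv (by ring)

lemma hasDerivAt_prodRpow_snd (hu : 0 < y + a * x) :
    HasDerivAt (prodRpow c p q a x) (prodRpow (c * q) p (q - 1) a x y) y := by
  have hu_q : HasDerivAt (fun s => (s + a * x) ^ q) (q * (y + a * x) ^ (q - 1)) y := by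
    simpa using ((hasDerivAt_id y).add_const (a * x)).rpow_const (p := q) (Or.inl hu.ne')
  unfold prodRpow
  exact (hu_q.const_mul (c * x ^ p)).congr_deriv (by ring)

lemma wxx_prodRpow (hx : 0 < x) (hu : 0 < y + a * x) :
    wxx (prodRpow c p q a) x y = prodRpow (c * p * (p - 1)) (p - 2) q a x y
      + prodRpow (2 * c * a * p * q) (p - 1) (q - 1) a x y
      + prodRpow (c * a ^ 2 * q * (q - 1)) p (q - 2) a x y := by
  have hderiv : (fun t => deriv (prodRpow c p q a · y) t) =ᶠ[𝓝 x]
      fun t => prodRpow (c * p) (p - 1) q a t y + prodRpow (c * a * q) p (q - 1) a t y := by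
    have hu_near : ∀ᶠ t in 𝓝 x, 0 < y + a * t :=
      ((by fun_prop : Continuous fun t => y + a * t).tendsto x).eventually_const_lt hu
    filter_upwards [lt_mem_nhds hx, hu_near] with t ht hut
    exact (hasDerivAt_prodRpow_fst ht hut).deriv
  rw [wxx, hderiv.deriv_eq]
  refine ((hasDerivAt_prodRpow_fst hx hu).add (hasDerivAt_prodRpow_fst hx hu)).deriv.trans ?_
  simp only [prodRpow]
  ring_nf

lemma wyy_prodRpow (hu : 0 < y + a * x) :
    wyy (prodRpow c p q a) x y = prodRpow (c * q * (q - 1)) p (q - 2) a x y := by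
  have hderiv :
      (fun s => deriv (prodRpow c p q a x) s) =ᶠ[𝓝 y] prodRpow (c * q) p (q - 1) a x := by
    have hu_near : ∀ᶠ s in 𝓝 y, 0 < s + a * x :=
      ((by fun_prop : Continuous fun s => s + a * x).tendsto y).eventually_const_lt hu
    filter_upwards [hu_near] with s hus
    exact (hasDerivAt_prodRpow_snd hus).deriv
  rw [wyy, hderiv.deriv_eq, (hasDerivAt_prodRpow_snd hu).deriv]
  simp only [prodRpow]
  ring_nf

lemma wxy_prodRpow (hx : 0 < x) (hu : 0 < y + a * x) :
    wxy (prodRpow c p q a) x y = prodRpow (c * p * q) (p - 1) (q - 1) a x y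
      + prodRpow (c * a * q * (q - 1)) p (q - 2) a x y := by
  have hderiv : (fun s => deriv (prodRpow c p q a · s) x) =ᶠ[𝓝 y]
      fun s => prodRpow (c * p) (p - 1) q a x s + prodRpow (c * a * q) p (q - 1) a x s := by
    have hu_near : ∀ᶠ s in 𝓝 y, 0 < s + a * x :=
      ((by fun_prop : Continuous fun s => s + a * x).tendsto y).eventually_const_lt hu
    filter_upwards [hu_near] with s hus
    exact (hasDerivAt_prodRpow_fst hx hus).deriv
  rw [wxy, hderiv.deriv_eq]
  refine ((hasDerivAt_prodRpow_snd hu).add (hasDerivAt_prodRpow_snd hu)).deriv.trans ?_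
  simp only [prodRpow]
  ring_nf

lemma kiso_prodRpow (hx : 0 < x) (hu : 0 < y + a * x) :
    Kiso (prodRpow c p q a) x y =
      c ^ 2 * p * q * (1 - (p + q)) * (x ^ (p - 1) * (y + a * x) ^ (q - 1)) ^ 2 := by
  rw [Kiso, wxx_prodRpow hx hu, wyy_prodRpow hu, wxy_prodRpow hx hu]
  simp only [prodRpow, Real.rpow_sub hx, Real.rpow_sub hu, Real.rpow_one, Real.rpow_two]
  have hx' := hx.ne'
  have hu' := hu.ne'
  generalize y + a * x = u at hu' ⊢
  field_simp
  ring

end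

theorem stmt1_general (a c₁ c₂ : ℝ) (hc : c₂ ≠ 1) :
    ∀ x y : ℝ, 0 < x → 0 < y + a * x →
      Kiso (fun x y => c₁ * x ^ (1 / (1 - c₂)) * (y + a * x) ^ (c₂ / (c₂ - 1))) x y = 0 := by
  intro x y hx hu
  have hexp : 1 / (1 - c₂) + c₂ / (c₂ - 1) = 1 := by
    have : c₂ - 1 ≠ 0 := sub_ne_zero.mpr hc
    field_simp
    ring
  change Kiso (prodRpow c₁ (1 / (1 - c₂)) (c₂ / (c₂ - 1)) a) x y = 0
  rw [kiso_prodRpow hx hu, hexp, sub_self, mul_zero, zero_mul]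

theorem stmt1 (a c₁ c₂ : ℝ) (ha : a ≠ 0) (hc : c₂ ≠ 1) :
    ∀ x y : ℝ, 0 < x → 0 < y + a * x →
      Kiso (fun x y => c₁ * x ^ (1 / (1 - c₂)) * (y + a * x) ^ (c₂ / (c₂ - 1))) x y = 0 :=
  stmt1_general a c₁ c₂ hc
end

section
/- Let f₁, f₂ : ℝ → ℝ be twice differentiable functions such that K₀ := f₁(u₁)f₂(u₂)f₁''(u₁)f₂''(u₂) − (f₁'(u₁)f₂'(u₂))² is a nonzero constant for all (u₁,u₂), with f₁'' identically zero and f₁ non-constant. Then f₁(u₁) = c₁u₁ + c₂ with c₁ ≠ 0, K₀ < 0, and f₂'(u₂)² = −K₀/c₁², so f₂ is affine with slope ±√(−K₀)/|c₁|. -/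
/-!
Since `f₁'' = 0`, the curvature identity reads `(f₁'(u₁) f₂'(u₂))² = -K₀` for all `u₁, u₂`,
so `K₀ < 0` and each of `f₁'`, `f₂'` has constant (nonzero) square. A derivative can only
jump between `a` and `-a` by passing through `0` (Darboux), so both derivatives are
constant and `f₁`, `f₂` are affine, with slopes `c₁`, `q` satisfying `(c₁ q)² = -K₀`.
-/

theorem deriv_eq_of_sq_deriv_eq {f : ℝ → ℝ} (hf : Differentiable ℝ f) {x₀ : ℝ}
    (h : ∀ t, deriv f t ^ 2 = deriv f x₀ ^ 2) (t : ℝ) : deriv f t = deriv f x₀ := by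
  rcases sq_eq_sq_iff_eq_or_eq_neg.1 (h t) with ht | ht
  · exact ht
  have hzero : (0 : ℝ) ∈ Set.uIcc (deriv f t) (deriv f x₀) := by
    rw [ht, Set.mem_uIcc]
    rcases le_total 0 (deriv f x₀) with h₀ | h₀
    · exact Or.inl ⟨by linarith, h₀⟩
    · exact Or.inr ⟨h₀, by linarith⟩
  obtain ⟨s, -, hs⟩ := (Set.ordConnected_univ.image_deriv fun x _ => hf x).uIcc_subset
    (Set.mem_image_of_mem _ (Set.mem_univ t)) (Set.mem_image_of_mem _ (Set.mem_univ x₀)) hzero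
  have hx₀ : deriv f x₀ = 0 := by simpa [hs] using (h s).symm
  rw [ht, hx₀, neg_zero]

theorem eq_mul_add_of_deriv_eq {f : ℝ → ℝ} (hf : Differentiable ℝ f) {c : ℝ}
    (h : ∀ t, deriv f t = c) (t : ℝ) : f t = c * t + f 0 := by
  have hg : Differentiable ℝ fun t => f t - c * t := by fun_prop
  have hconst := is_const_of_deriv_eq_zero hg (fun x => by
    rw [deriv_fun_sub (hf x) (by fun_prop), h x]
    simp) t 0
  simp only [mul_zero, sub_zero] at hconst
  linarith

theorem stmt4_general (f₁ f₂ : ℝ → ℝ) (K₀ : ℝ)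
    (hf₁ : ∀ t, DifferentiableAt ℝ f₁ t)
    (hf₂ : ∀ t, DifferentiableAt ℝ f₂ t)
    (hK₀ : K₀ ≠ 0)
    (hK : ∀ u₁ u₂ : ℝ,
      f₁ u₁ * f₂ u₂ * D2 f₁ u₁ * D2 f₂ u₂ - (deriv f₁ u₁ * deriv f₂ u₂)^2 = K₀)
    (h₁'' : ∀ t, D2 f₁ t = 0) :
    ∃ c₁ c₂ : ℝ, c₁ ≠ 0 ∧ (∀ t, f₁ t = c₁ * t + c₂) ∧ K₀ < 0 ∧
      (∀ u, (deriv f₂ u)^2 = -K₀ / c₁^2) ∧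
      ∃ c₃ : ℝ, (∀ u, f₂ u = (Real.sqrt (-K₀) / |c₁|) * u + c₃) ∨
                 (∀ u, f₂ u = -(Real.sqrt (-K₀) / |c₁|) * u + c₃) := by
  set p := deriv f₁ 0
  set q := deriv f₂ 0
  have hprod : ∀ u₁ u₂, (deriv f₁ u₁ * deriv f₂ u₂) ^ 2 = -K₀ := fun u₁ u₂ => by
    have h := hK u₁ u₂
    rw [h₁'' u₁, mul_zero, zero_mul, zero_sub] at h
    linarith
  have hK₀_eq : K₀ = -(p * q) ^ 2 := by linarith [hprod 0 0]
  obtain ⟨hp, hq⟩ : p ≠ 0 ∧ q ≠ 0 := mul_ne_zero_iff.1 fun h => hK₀ (by simp [hK₀_eq, h])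
  have hd₁ : ∀ t, deriv f₁ t = p := deriv_eq_of_sq_deriv_eq hf₁ fun t =>
    mul_right_cancel₀ (pow_ne_zero 2 hq) (by rw [← mul_pow, ← mul_pow, hprod, hprod])
  have hd₂ : ∀ t, deriv f₂ t = q := deriv_eq_of_sq_deriv_eq hf₂ fun t =>
    mul_left_cancel₀ (pow_ne_zero 2 hp) (by rw [← mul_pow, ← mul_pow, hprod, hprod])
  have hslope : Real.sqrt (-K₀) / |p| = |q| := by
    rw [hK₀_eq, neg_neg, Real.sqrt_sq_eq_abs, abs_mul, mul_div_cancel_left₀ _ (abs_ne_zero.2 hp)]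
  refine ⟨p, f₁ 0, hp, eq_mul_add_of_deriv_eq hf₁ hd₁, ?_, fun u => ?_, f₂ 0, ?_⟩
  · rw [hK₀_eq, neg_neg_iff_pos]
    positivity
  · rw [hd₂, hK₀_eq, neg_neg, mul_pow, mul_div_cancel_left₀ _ (pow_ne_zero 2 hp)]
  · rw [hslope]
    rcases abs_choice q with h | h
    · exact Or.inl (by rw [h]; exact eq_mul_add_of_deriv_eq hf₂ hd₂)
    · exact Or.inr (by rw [h, neg_neg]; exact eq_mul_add_of_deriv_eq hf₂ hd₂)

theorem stmt4 (f₁ f₂ : ℝ → ℝ) (K₀ : ℝ)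
    (hf₁ : ∀ t, DifferentiableAt ℝ f₁ t) (hf₁' : ∀ t, DifferentiableAt ℝ (deriv f₁) t)
    (hf₂ : ∀ t, DifferentiableAt ℝ f₂ t) (hf₂' : ∀ t, DifferentiableAt ℝ (deriv f₂) t)
    (hK₀ : K₀ ≠ 0)
    (hK : ∀ u₁ u₂ : ℝ,
      f₁ u₁ * f₂ u₂ * D2 f₁ u₁ * D2 f₂ u₂ - (deriv f₁ u₁ * deriv f₂ u₂)^2 = K₀)
    (h₁'' : ∀ t, D2 f₁ t = 0)
    (h₁nc : ∃ s t, f₁ s ≠ f₁ t) :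
    ∃ c₁ c₂ : ℝ, c₁ ≠ 0 ∧ (∀ t, f₁ t = c₁ * t + c₂) ∧ K₀ < 0 ∧
      (∀ u, (deriv f₂ u)^2 = -K₀ / c₁^2) ∧
      ∃ c₃ : ℝ, (∀ u, f₂ u = (Real.sqrt (-K₀) / |c₁|) * u + c₃) ∨
                 (∀ u, f₂ u = -(Real.sqrt (-K₀) / |c₁|) * u + c₃) :=
  stmt4_general f₁ f₂ K₀ hf₁ hf₂ hK₀ hK h₁''
end

section
/- Let f₁, f₂ : ℝ → ℝ be twice continuously differentiable with f₁'' never zero and f₂'' never zero, f₁, f₂, f₁', f₂' nowhere zero, and suppose f₁f₂f₁''f₂'' − (f₁'f₂')² = K₀ is a nonzero constant on ℝ². Then a contradiction follows; i.e., no such pair (f₁, f₂) exists. -/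
/-! Write `A = f₁ f₁''`, `B = f₁'²`, `C = f₂ f₂''`, `D = f₂'²`, so that `A(u) C(v) - B(u) D(v) = K₀`.
For fixed `u` this is one linear equation on the points `(C v, D v)`; as soon as two of them differ,
and `K₀ ≠ 0`, the equation determines `(A u, B u)`, so `B` is constant. But `f'²` is never constant
when `f''` never vanishes: otherwise `2 f' f'' = 0` forces `f' = 0`, hence `f'' = 0`. -/

theorem eq_of_forall_mul_sub_mul_eq {𝕜 α β : Type*} [Field 𝕜] {A B : α → 𝕜} {C D : β → 𝕜}
    {k : 𝕜} (hk : k ≠ 0) (h : ∀ u v, A u * C v - B u * D v = k) {s t : β} (hst : D s ≠ D t)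
    (p q : α) : B p = B q := by
  set x := A p - A q
  set y := B p - B q
  set m := y * A p - x * B p
  have hxs : x * C s = y * D s := by linear_combination h p s - h q s
  have hxt : x * C t = y * D t := by linear_combination h p t - h q t
  have hms : y * k = C s * m := by linear_combination -y * h p s + B p * hxs
  have hmt : y * k = C t * m := by linear_combination -y * h p t + B p * hxt
  have : y ^ 2 * k * (D s - D t) = 0 := by
    linear_combination (y * D s - x * (C s + C t)) * hms - C s * m * hxs
      - (y * D t - x * (C s + C t)) * hmt + C t * m * hxt
  have hy : y = 0 := by simpa [hk, sub_eq_zero, hst] using this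
  exact sub_eq_zero.mp hy

theorem exists_sq_deriv_ne {f : ℝ → ℝ} (h : ∀ t, D2 f t ≠ 0) :
    ∃ s t, deriv f s ^ 2 ≠ deriv f t ^ 2 := by
  by_contra! hconst
  have hzero : ∀ t, deriv f t = 0 := by
    intro t
    -- `D2 f t ≠ 0` already makes `deriv f` differentiable at `t`, as `deriv` is `0` elsewhere.
    have hsq : HasDerivAt (fun t => deriv f t ^ 2) (2 * deriv f t * D2 f t) t := by
      simpa [D2] using ((differentiableAt_of_deriv_ne_zero (h t)).hasDerivAt).fun_pow 2
    have hflat : HasDerivAt (fun t => deriv f t ^ 2) 0 t := by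
      simpa only [funext fun s => hconst s t] using hasDerivAt_const t (deriv f t ^ 2)
    simpa [h t] using hsq.unique hflat
  exact h 0 (by simp [D2, funext hzero])

theorem stmt5_general (f₁ f₂ : ℝ → ℝ) (K₀ : ℝ)
    (h₁'' : ∀ t, D2 f₁ t ≠ 0) (h₂'' : ∀ t, D2 f₂ t ≠ 0)
    (hK₀ : K₀ ≠ 0)
    (hK : ∀ u₁ u₂ : ℝ,
      f₁ u₁ * f₂ u₂ * D2 f₁ u₁ * D2 f₂ u₂ - (deriv f₁ u₁ * deriv f₂ u₂)^2 = K₀) :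
    False := by
  obtain ⟨s, t, hst⟩ := exists_sq_deriv_ne h₂''
  obtain ⟨p, q, hpq⟩ := exists_sq_deriv_ne h₁''
  have hsep : ∀ u v, f₁ u * D2 f₁ u * (f₂ v * D2 f₂ v) - deriv f₁ u ^ 2 * deriv f₂ v ^ 2 = K₀ :=
    fun u v => by linear_combination hK u v
  exact hpq (eq_of_forall_mul_sub_mul_eq (A := fun u => f₁ u * D2 f₁ u) (B := fun u => deriv f₁ u ^ 2)
    (C := fun v => f₂ v * D2 f₂ v) (D := fun v => deriv f₂ v ^ 2) hK₀ hsep hst p q)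

theorem stmt5 (f₁ f₂ : ℝ → ℝ) (K₀ : ℝ)
    (hf₁ : ContDiff ℝ 2 f₁) (hf₂ : ContDiff ℝ 2 f₂)
    (h₁'' : ∀ t, D2 f₁ t ≠ 0) (h₂'' : ∀ t, D2 f₂ t ≠ 0)
    (h₁0 : ∀ t, f₁ t ≠ 0) (h₂0 : ∀ t, f₂ t ≠ 0)
    (h₁'0 : ∀ t, deriv f₁ t ≠ 0) (h₂'0 : ∀ t, deriv f₂ t ≠ 0)
    (hK₀ : K₀ ≠ 0)
    (hK : ∀ u₁ u₂ : ℝ,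
      f₁ u₁ * f₂ u₂ * D2 f₁ u₁ * D2 f₂ u₂ - (deriv f₁ u₁ * deriv f₂ u₂)^2 = K₀) :
    False :=
  stmt5_general f₁ f₂ K₀ h₁'' h₂'' hK₀ hK
end

section
/- Let f₁, f₂ : ℝ → ℝ be twice differentiable with f₂' nowhere zero, f₁(u₁) = c₁u₁ + c₂ for some c₁ ≠ 0, and suppose (1+a²)f₁(u₁)f₂''(u₂) + 2a f₁'(u₁)f₂'(u₂) + f₁''(u₁)f₂(u₂) = 0 for all (u₁, u₂), where a ≠ 0. Then a contradiction follows. -/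
theorem deriv_eq_const_of_affine {𝕜 : Type*} [NontriviallyNormedField 𝕜] {f : 𝕜 → 𝕜} {c d : 𝕜}
    (hf : ∀ t, f t = c * t + d) : deriv f = fun _ => c := by
  rw [funext hf]
  funext t
  simp

theorem D2_eq_zero_of_affine {f : ℝ → ℝ} {c d : ℝ} (hf : ∀ t, f t = c * t + d) : D2 f = 0 := by
  funext t
  simp [D2, deriv_eq_const_of_affine hf]

theorem stmt7_general (a c₁ c₂ : ℝ) (f₁ f₂ : ℝ → ℝ)
    (ha : a ≠ 0) (hc₁ : c₁ ≠ 0)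
    (h₁ : ∀ t, f₁ t = c₁ * t + c₂)
    (h₂' : ∀ t, deriv f₂ t ≠ 0)
    (hmin : ∀ u₁ u₂ : ℝ,
      (1 + a^2) * f₁ u₁ * D2 f₂ u₂ + 2 * a * deriv f₁ u₁ * deriv f₂ u₂
        + D2 f₁ u₁ * f₂ u₂ = 0) :
    False := by
  -- At the zero of f₁ only the mixed term 2a f₁' f₂' survives.
  have hroot : f₁ (-c₂ / c₁) = 0 := by
    rw [h₁]
    field_simp
    ring
  have hmixed := hmin (-c₂ / c₁) 0
  rw [hroot, deriv_eq_const_of_affine h₁, D2_eq_zero_of_affine h₁] at hmixed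
  exact h₂' 0 (by simpa [ha, hc₁] using hmixed)

theorem stmt7 (a c₁ c₂ : ℝ) (f₁ f₂ : ℝ → ℝ)
    (hf₁ : ∀ t, DifferentiableAt ℝ f₁ t) (hf₁' : ∀ t, DifferentiableAt ℝ (deriv f₁) t)
    (hf₂ : ∀ t, DifferentiableAt ℝ f₂ t) (hf₂' : ∀ t, DifferentiableAt ℝ (deriv f₂) t)
    (ha : a ≠ 0) (hc₁ : c₁ ≠ 0)
    (h₁ : ∀ t, f₁ t = c₁ * t + c₂)
    (h₂' : ∀ t, deriv f₂ t ≠ 0)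
    (hmin : ∀ u₁ u₂ : ℝ,
      (1 + a^2) * f₁ u₁ * D2 f₂ u₂ + 2 * a * deriv f₁ u₁ * deriv f₂ u₂
        + D2 f₁ u₁ * f₂ u₂ = 0) :
    False :=
  stmt7_general a c₁ c₂ f₁ f₂ ha hc₁ h₁ h₂' hmin
end

section
/- Let f₁, f₂ : ℝ → ℝ be twice differentiable with f₁'' and f₂'' nowhere zero, and f₁, f₂, f₁', f₂' nowhere zero, with a ≠ 0. Then the equation (1+a²)f₁(u₁)f₂''(u₂) + 2af₁'(u₁)f₂'(u₂) + f₁''(u₁)f₂(u₂) = 2H₀ cannot hold identically for any nonzero constant H₀. -/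
/-!
Writing `w x y = f x * g y`, the hypothesis says that the constant-coefficient operator
`r ∂ₓ² + q ∂ₓ∂ᵧ + p ∂ᵧ²` maps `w` to the nonzero constant `H`. Differentiating in `x` and
eliminating `f'''` between two values of `y` leaves a linear relation between `f'` and `f''`
with Wronskian-type coefficients in `y`, so either `f'' = λ f'` or `g' = c g`, whence
`g'' = c g'`. If `f'' = λ f'`, substituting back factors the equation as
`(f' - λ f)(x) (q g' + r λ g)(y) = H`; hence `q g' + r λ g` is constant, which together with the
differentiated equation makes `g'` constant, against `g'' ≠ 0`. The case `g'' = c g'` is the same argument with `f` and `g` exchanged.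
-/

lemma exists_ne_zero_of_deriv_ne_zero {𝕜 F : Type*} [NontriviallyNormedField 𝕜]
    [NormedAddCommGroup F] [NormedSpace 𝕜 F] {f : 𝕜 → F} {x : 𝕜} (h : deriv f x ≠ 0) :
    ∃ y, f y ≠ 0 := by
  by_contra! hf
  exact h (by simp [funext hf])

lemma HasDerivAt.eq_zero_of_forall_eq {𝕜 F : Type*} [NontriviallyNormedField 𝕜]
    [NormedAddCommGroup F] [NormedSpace 𝕜 F] {f : 𝕜 → F} {f' c : F} {x : 𝕜}
    (hf : HasDerivAt f f' x) (hc : ∀ t, f t = c) : f' = 0 := by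
  obtain rfl : f = fun _ => c := funext hc
  exact hf.unique (hasDerivAt_const x c)

def SeparableEq (p q r H : ℝ) (f g : ℝ → ℝ) : Prop :=
  ∀ x y, p * f x * D2 g y + q * deriv f x * deriv g y + r * D2 f x * g y = H

namespace SeparableEq

variable {p q r H : ℝ} {f g : ℝ → ℝ}

lemma symm (h : SeparableEq p q r H f g) : SeparableEq r q p H g f :=
  fun y x => by linear_combination h x y

lemma differentiable_D2_left (h : SeparableEq p q r H f g) (hr : r ≠ 0) {y₀ : ℝ}
    (hy₀ : g y₀ ≠ 0) (hf : Differentiable ℝ f) (hf' : Differentiable ℝ (deriv f)) :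
    Differentiable ℝ (D2 f) := by
  have hD2 : D2 f = fun x => (H - p * D2 g y₀ * f x - q * deriv g y₀ * deriv f x) / (r * g y₀) := by
    funext x
    field_simp
    linear_combination h x y₀
  rw [hD2]
  fun_prop

lemma deriv_left (h : SeparableEq p q r H f g) (hf : Differentiable ℝ f)
    (hf' : Differentiable ℝ (deriv f)) (hf'' : Differentiable ℝ (D2 f)) :
    SeparableEq p q r 0 (deriv f) g := by
  intro x y
  have hx : HasDerivAt (fun t => p * D2 g y * f t + q * deriv g y * deriv f t + r * g y * D2 f t)
      (p * D2 g y * deriv f x + q * deriv g y * D2 f x + r * g y * D2 (deriv f) x) x :=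
    (((hf x).hasDerivAt.const_mul _).add ((hf' x).hasDerivAt.const_mul _)).add
      ((hf'' x).hasDerivAt.const_mul _)
  have hx0 := hx.eq_zero_of_forall_eq (c := H) fun t => by linear_combination h t y
  unfold D2 at *
  linear_combination hx0

lemma D2_right_eq_zero_of_D2_left_eq_mul (h : SeparableEq p q r H f g) (hp : p ≠ 0)
    (hr : r ≠ 0) (hH : H ≠ 0) (hf : Differentiable ℝ f) (hf' : Differentiable ℝ (deriv f))
    (hg : Differentiable ℝ g) (hg' : Differentiable ℝ (deriv g)) {l x₀ : ℝ}
    (hl : ∀ x, D2 f x = l * deriv f x) (hx₀ : D2 f x₀ ≠ 0) (y : ℝ) : D2 g y = 0 := by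
  have hl0 : l ≠ 0 := left_ne_zero_of_mul (hl x₀ ▸ hx₀)
  have hfx₀ : deriv f x₀ ≠ 0 := right_ne_zero_of_mul (hl x₀ ▸ hx₀)
  have hD2f : D2 f = fun x => l * deriv f x := funext hl
  have hD3f : D2 (deriv f) x₀ = l ^ 2 * deriv f x₀ := by
    change deriv (D2 f) x₀ = _
    rw [hD2f, deriv_const_mul_field, ← D2, hl]
    ring
  have hA := h.deriv_left hf hf' (hD2f ▸ hf'.const_mul l)
  have hODE : ∀ y, p * D2 g y + q * l * deriv g y + r * l ^ 2 * g y = 0 := fun y =>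
    mul_left_cancel₀ hfx₀ (by
      have hA' := hA x₀ y
      unfold D2 at *
      linear_combination hA' - (q * deriv g y) * hl x₀ - r * g y * hD3f)
  have hfactor : ∀ x y, (deriv f x - l * f x) * (q * deriv g y + r * l * g y) = H := fun x y => by
    linear_combination h x y - f x * hODE y - r * g y * hl x
  set k := q * deriv g y + r * l * g y
  have hconst : ∀ t, q * deriv g t + r * l * g t = k := fun t =>
    mul_left_cancel₀ (left_ne_zero_of_mul ((hfactor x₀ y).symm ▸ hH))
      ((hfactor x₀ t).trans (hfactor x₀ y).symm)
  have hdconst : ∀ t, q * D2 g t + r * l * deriv g t = 0 := fun t =>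
    (((hg' t).hasDerivAt.const_mul q).add ((hg t).hasDerivAt.const_mul (r * l))).eq_zero_of_forall_eq
      hconst
  have hg'const : deriv g = fun _ => q * k / (p * r) := by
    funext t
    field_simp
    exact mul_left_cancel₀ hl0 (by linear_combination p * hdconst t - q * hODE t + q * l * hconst t)
  change deriv (deriv g) y = 0
  rw [hg'const, deriv_const]

lemma D2_left_eq_mul_or_D2_right_eq_mul (h : SeparableEq p q r H f g) (hq : q ≠ 0)
    (hr : r ≠ 0) (hf : Differentiable ℝ f) (hf' : Differentiable ℝ (deriv f))
    {y₀ : ℝ} (hy₀ : g y₀ ≠ 0) :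
    (∃ l, ∀ x, D2 f x = l * deriv f x) ∨ (∃ c, ∀ y, D2 g y = c * deriv g y) := by
  have hA := h.deriv_left hf hf' (h.differentiable_D2_left hr hy₀ hf hf')
  -- eliminating `f'''` between `y` and `y₀`
  have hW : ∀ x y, p * deriv f x * (D2 g y * g y₀ - g y * D2 g y₀)
      + q * D2 f x * (deriv g y * g y₀ - g y * deriv g y₀) = 0 := fun x y => by
    have hAy := hA x y
    have hAy₀ := hA x y₀
    unfold D2 at *
    linear_combination g y₀ * hAy - g y * hAy₀
  by_cases hWronski : ∀ y, deriv g y * g y₀ - g y * deriv g y₀ = 0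
  · right
    refine ⟨deriv g y₀ / g y₀, fun y => ?_⟩
    have hg'c : deriv g = fun y => deriv g y₀ / g y₀ * g y := by
      funext y
      field_simp
      linear_combination hWronski y
    change deriv (deriv g) y = _
    rw [hg'c, deriv_const_mul_field, ← hg'c]
  · left
    push Not at hWronski
    obtain ⟨y₁, hy₁⟩ := hWronski
    refine ⟨-(p * (D2 g y₁ * g y₀ - g y₁ * D2 g y₀)) / (q * (deriv g y₁ * g y₀ - g y₁ * deriv g y₀)),
      fun x => ?_⟩
    rw [div_mul_eq_mul_div, eq_div_iff (mul_ne_zero hq hy₁)]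
    linear_combination hW x y₁

end SeparableEq

theorem stmt11_general (a H₀ : ℝ) (f₁ f₂ : ℝ → ℝ)
    (hf₁ : ∀ t, DifferentiableAt ℝ f₁ t) (hf₁' : ∀ t, DifferentiableAt ℝ (deriv f₁) t)
    (hf₂ : ∀ t, DifferentiableAt ℝ f₂ t) (hf₂' : ∀ t, DifferentiableAt ℝ (deriv f₂) t)
    (ha : a ≠ 0) (hH₀ : H₀ ≠ 0)
    (h₁'' : ∀ t, D2 f₁ t ≠ 0) (h₂'' : ∀ t, D2 f₂ t ≠ 0)
    (hH : ∀ u₁ u₂ : ℝ,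
      (1 + a^2) * f₁ u₁ * D2 f₂ u₂ + 2 * a * deriv f₁ u₁ * deriv f₂ u₂
        + D2 f₁ u₁ * f₂ u₂ = 2 * H₀) :
    False := by
  have h : SeparableEq (1 + a ^ 2) (2 * a) 1 (2 * H₀) f₁ f₂ := fun x y => by
    linear_combination hH x y
  have hp : 1 + a ^ 2 ≠ 0 := by positivity
  have hH : 2 * H₀ ≠ 0 := mul_ne_zero two_ne_zero hH₀
  obtain ⟨y₁, hy₁⟩ := exists_ne_zero_of_deriv_ne_zero (h₂'' 0)
  obtain ⟨y₀, hy₀⟩ := exists_ne_zero_of_deriv_ne_zero hy₁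
  rcases h.D2_left_eq_mul_or_D2_right_eq_mul (mul_ne_zero two_ne_zero ha) one_ne_zero
    hf₁ hf₁' hy₀ with ⟨l, hl⟩ | ⟨c, hc⟩
  · exact h₂'' 0 (h.D2_right_eq_zero_of_D2_left_eq_mul hp one_ne_zero hH hf₁ hf₁' hf₂ hf₂'
      hl (h₁'' 0) 0)
  · exact h₁'' 0 (h.symm.D2_right_eq_zero_of_D2_left_eq_mul one_ne_zero hp hH hf₂ hf₂' hf₁ hf₁'
      hc (h₂'' 0) 0)

theorem stmt11 (a H₀ : ℝ) (f₁ f₂ : ℝ → ℝ)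
    (hf₁ : ∀ t, DifferentiableAt ℝ f₁ t) (hf₁' : ∀ t, DifferentiableAt ℝ (deriv f₁) t)
    (hf₂ : ∀ t, DifferentiableAt ℝ f₂ t) (hf₂' : ∀ t, DifferentiableAt ℝ (deriv f₂) t)
    (ha : a ≠ 0) (hH₀ : H₀ ≠ 0)
    (h₁'' : ∀ t, D2 f₁ t ≠ 0) (h₂'' : ∀ t, D2 f₂ t ≠ 0)
    (h₁0 : ∀ t, f₁ t ≠ 0) (h₂0 : ∀ t, f₂ t ≠ 0)
    (h₁'0 : ∀ t, deriv f₁ t ≠ 0) (h₂'0 : ∀ t, deriv f₂ t ≠ 0)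
    (hH : ∀ u₁ u₂ : ℝ,
      (1 + a^2) * f₁ u₁ * D2 f₂ u₂ + 2 * a * deriv f₁ u₁ * deriv f₂ u₂
        + D2 f₁ u₁ * f₂ u₂ = 2 * H₀) :
    False :=
  stmt11_general a H₀ f₁ f₂ hf₁ hf₁' hf₂ hf₂' ha hH₀ h₁'' h₂'' hH
end
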